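/- For the quadratic polynomial f(z) = z² − 29/16 over ℚ, the rational points 7/4, 1/4, −7/4, 5/4, −5/4, −1/4, 3/4, −3/4 and the point at infinity are all preperiodic for f. -/

import Mathlib

/-! The nine points are closed under `f`: `5/4 ↦ -1/4 ↦ -7/4 ↦ 5/4` is a 3-cycle,
`7/4, 1/4, -5/4` map into it, `±3/4 ↦ -5/4`, and `∞` is fixed. An orbit that stays
in a finite set is finite. -/

theorem Set.Finite.range_iterate_of_mapsTo {α : Type*} {f : α → α} {s : Set α}
    (hs : s.Finite) (hf : Set.MapsTo f s s) {x : α} (hx : x ∈ s) :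
    (Set.range fun n : ℕ => f^[n] x).Finite :=
  hs.subset <| Set.range_subset_iff.2 fun n => hf.iterate n hx

/-- For `f(z) = z² - 29/16` on `ℙ¹(ℚ)` (modelled as `Option ℚ`, with `none` the
fixed point at infinity), the points `7/4, 1/4, -7/4, 5/4, -5/4, -1/4, 3/4,
-3/4` and the point at infinity are all preperiodic. -/
theorem stmt_13 :
    letI F : Option ℚ → Option ℚ := fun P => P.map fun z => z ^ 2 - 29 / 16
    ∀ P ∈ ({some (7/4), some (1/4), some (-7/4), some (5/4), some (-5/4),
        some (-1/4), some (3/4), some (-3/4), none} : Set (Option ℚ)),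
      (Set.range fun n : ℕ => F^[n] P).Finite := by
  intro P hP
  refine Set.Finite.range_iterate_of_mapsTo (Set.toFinite _) ?_ hP
  rintro Q (rfl | rfl | rfl | rfl | rfl | rfl | rfl | rfl | rfl) <;> norm_num
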